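/- Let k > 2 and let (A_n) be the anti-k-bonacci sequence with κ = k² + 1 and i = ⌊k/2⌋. Then for each n ≥ 1 there is an integer a_n with A_n ≡ i·k + a_n (mod κ), where 1 ≤ a_n ≤ k if k is even, and i+1 ≤ a_n ≤ i+k if k is odd. -/

import Mathlib

/-- `A` and `B` (indexed from 1) are complementary strictly increasing sequences
of positive integers: every positive integer lies in exactly one of their ranges. -/
def CompPair (A B : ℕ → ℕ) : Prop :=
  StrictMonoOn A (Set.Ici 1) ∧ StrictMonoOn B (Set.Ici 1) ∧
  (∀ n, 1 ≤ n → 1 ≤ A n) ∧ (∀ n, 1 ≤ n → 1 ≤ B n) ∧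
  ∀ m, 1 ≤ m →
    ((∃ n, 1 ≤ n ∧ A n = m) ∧ ¬(∃ n, 1 ≤ n ∧ B n = m)) ∨
    (¬(∃ n, 1 ≤ n ∧ A n = m) ∧ (∃ n, 1 ≤ n ∧ B n = m))

/-- `(A, B)` is the anti-recurrence pair for the positive linear form `a` of dimension `k`:
`A n = Σ_{j=1}^k a_j * B_{(n-1)k+j}` for all `n ≥ 1`. -/
def AntiRec (k : ℕ) (a : Fin k → ℕ) (A B : ℕ → ℕ) : Prop :=
  CompPair A B ∧
  ∀ n, 1 ≤ n → A n = ∑ j : Fin k, a j * B ((n - 1) * k + (j : ℕ) + 1)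

/-!
Write `L = ⌊k²/2⌋`. Counting the positive integers up to `B m`, and using that `A t - t` is
the number of `B`-terms below `A t`, gives `B m = m + #{t | A t - t < m}`. Summing this over
the block `m ∈ ((n-1)k, nk]` that defines `A n` and exchanging the two sums,
`A n = (n-1)k² + k(k+1)/2 + ∑_{t<n} clamp(nk - (A t - t), 0, k)`.
By strong induction `A t - t` lies in the window `[(t-1)k² + L, (t-1)k² + L + k)`. The clamped
sum is then squeezed between two staircases `σ(u) = ∑_t clamp(u - t k², 0, k)`, and
`u ≤ k σ(u) ≤ u + k² - k`; this puts `A n - n` into its own window.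
The window is exactly the congruence of the theorem, with `a_n = A n - n + 1 - (n-1)k² - ⌊k/2⌋k`.
-/

open Finset

namespace AntiBonacci

def countLE (f : ℕ → ℕ) (x : ℕ) : ℕ := #{t ∈ Icc 1 x | f t ≤ x}

section StrictMonoOn

variable {f : ℕ → ℕ} (hf : StrictMonoOn f (Set.Ici 1)) (hf1 : 1 ≤ f 1)
include hf hf1

theorem le_apply {t : ℕ} (ht : 1 ≤ t) : t ≤ f t := by
  induction t, ht using Nat.le_induction with
  | base => exact hf1
  | succ t ht ih =>
    have := hf (Set.mem_Ici.2 ht) (Set.mem_Ici.2 (by omega)) (lt_add_one t)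
    omega

theorem le_countLE_iff {m x : ℕ} (hm : 1 ≤ m) : m ≤ countLE f x ↔ f m ≤ x := by
  constructor
  · intro hle
    by_contra! hlt
    have hsub : {t ∈ Icc 1 x | f t ≤ x} ⊆ Ico 1 m := by
      intro t ht
      simp only [mem_filter, mem_Icc, mem_Ico] at ht ⊢
      exact ⟨ht.1.1, (hf.lt_iff_lt (Set.mem_Ici.2 ht.1.1) (Set.mem_Ici.2 hm)).1 (by omega)⟩
    have := card_le_card hsub
    rw [Nat.card_Ico] at this
    unfold countLE at hle
    omega
  · intro hle
    have hsub : Icc 1 m ⊆ {t ∈ Icc 1 x | f t ≤ x} := by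
      intro t ht
      rw [mem_Icc] at ht
      have hft : f t ≤ f m := (hf.le_iff_le (Set.mem_Ici.2 ht.1) (Set.mem_Ici.2 hm)).2 ht.2
      have := le_apply hf hf1 ht.1
      simp only [mem_filter, mem_Icc]
      omega
    simpa [countLE] using card_le_card hsub

theorem countLE_apply {n : ℕ} (hn : 1 ≤ n) : countLE f (f n) = n := by
  have hnext : ¬ n + 1 ≤ countLE f (f n) := by
    rw [le_countLE_iff hf hf1 (by omega), not_le]
    exact hf (Set.mem_Ici.2 hn) (Set.mem_Ici.2 (by omega)) (lt_add_one n)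
  have := (le_countLE_iff hf hf1 hn).2 le_rfl
  omega

end StrictMonoOn

def stairSum (h p N : ℕ) (u : ℤ) : ℤ := ∑ t ∈ range N, min (max (u - t * p) 0) h

section stairSum

variable {h p : ℕ}

theorem stairSum_succ (N : ℕ) (u : ℤ) :
    stairSum h p (N + 1) u = min (max u 0) h + stairSum h p N (u - p) := by
  simp only [stairSum, sum_range_succ', Nat.cast_zero, zero_mul, sub_zero, Nat.cast_succ]
  rw [add_comm]
  congr 2 with t
  ring_nf

theorem stairSum_eq_zero (N : ℕ) {u : ℤ} (hu : u ≤ 0) : stairSum h p N u = 0 :=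
  sum_eq_zero fun t _ => by
    have : u - t * p ≤ 0 := by nlinarith [t.cast_nonneg (α := ℤ), p.cast_nonneg (α := ℤ)]
    simp [max_eq_right this]

theorem stairSum_nonneg (N : ℕ) (u : ℤ) : 0 ≤ stairSum h p N u :=
  sum_nonneg fun _ _ => le_min (le_max_right _ _) h.cast_nonneg

theorem mul_le_mul_stairSum (hhp : h ≤ p) {N : ℕ} {u : ℤ} (hu : u ≤ N * p) :
    h * u ≤ p * stairSum h p N u := by
  induction N generalizing u with
  | zero =>
    simpa [stairSum] using mul_nonpos_of_nonneg_of_nonpos h.cast_nonneg (by simpa using hu)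
  | succ N ih =>
    have hhpz : (h : ℤ) ≤ p := by exact_mod_cast hhp
    rw [stairSum_succ]
    by_cases hup : u ≤ p
    · have := stairSum_nonneg (h := h) (p := p) N (u - p)
      have : h * u ≤ p * min (max u 0) h := by
        rcases le_total u 0 with hu0 | hu0
        · nlinarith [h.cast_nonneg (α := ℤ), p.cast_nonneg (α := ℤ),
            le_min (le_max_right u 0) h.cast_nonneg]
        · rw [max_eq_left hu0]
          rcases le_total u h with huh | huh
          · rw [min_eq_left huh]; nlinarith
          · rw [min_eq_right huh]; nlinarith
      nlinarith [p.cast_nonneg (α := ℤ)]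
    · have hmin : min (max u 0) (h : ℤ) = h := by
        rw [max_eq_left (by linarith [p.cast_nonneg (α := ℤ)])]
        exact min_eq_right (by linarith)
      have := ih (u := u - p) (by push_cast at hu; linarith)
      rw [hmin]
      nlinarith

theorem mul_stairSum_le (hhp : h ≤ p) {N : ℕ} {u : ℤ} (hu : -((p : ℤ) - h) ≤ u) :
    p * stairSum h p N u ≤ h * u + h * (p - h) := by
  induction N generalizing u with
  | zero =>
    simp only [stairSum, range_zero, sum_empty, mul_zero]
    nlinarith [h.cast_nonneg (α := ℤ)]
  | succ N ih =>
    have hhpz : (h : ℤ) ≤ p := by exact_mod_cast hhp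
    rw [stairSum_succ]
    by_cases huh : (h : ℤ) ≤ u
    · have hmin : min (max u 0) (h : ℤ) = h := by
        rw [max_eq_left (by linarith [h.cast_nonneg (α := ℤ)])]
        exact min_eq_right huh
      have := ih (u := u - p) (by linarith)
      rw [hmin]
      nlinarith
    · rw [stairSum_eq_zero N (by linarith), add_zero]
      rcases le_total u 0 with hu0 | hu0
      · rw [max_eq_right hu0, min_eq_left h.cast_nonneg]
        nlinarith [h.cast_nonneg (α := ℤ)]
      · rw [max_eq_left hu0, min_eq_left (by linarith)]
        nlinarith

end stairSum

theorem mul_sum_clamp_bounds {k N : ℕ} (hk : 1 ≤ k) {c : ℕ → ℤ} {v : ℤ}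
    (hc : ∀ t < N, t * k ^ 2 ≤ c t ∧ c t ≤ t * k ^ 2 + k - 1)
    (hv : v - k + 1 ≤ N * k ^ 2) (hv' : k - k ^ 2 ≤ v) :
    v - k + 1 ≤ k * ∑ t ∈ range N, min (max (v - c t) 0) k ∧
      k * ∑ t ∈ range N, min (max (v - c t) 0) k ≤ v + k ^ 2 - k := by
  have hkp : k ≤ k ^ 2 := by nlinarith
  have hlo : stairSum k (k ^ 2) N (v - k + 1) ≤ ∑ t ∈ range N, min (max (v - c t) 0) k :=
    sum_le_sum fun t ht => by
      have := (hc t (mem_range.1 ht)).2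
      refine min_le_min (max_le_max ?_ le_rfl) le_rfl
      push_cast
      linarith
  have hhi : ∑ t ∈ range N, min (max (v - c t) 0) k ≤ stairSum k (k ^ 2) N v :=
    sum_le_sum fun t ht => by
      have := (hc t (mem_range.1 ht)).1
      refine min_le_min (max_le_max ?_ le_rfl) le_rfl
      push_cast
      linarith
  have h1 := mul_le_mul_stairSum hkp (u := v - k + 1) (N := N) (by push_cast; linarith)
  have h2 := mul_stairSum_le hkp (u := v) (N := N) (by push_cast; linarith)
  push_cast at h1 h2
  constructor
  · nlinarith
  · nlinarith

theorem card_filter_lt_add (a b k : ℕ) :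
    ((#{j ∈ range k | a < b + j + 1} : ℕ) : ℤ) = min (max ((b : ℤ) + k - a) 0) k := by
  have : {j ∈ range k | a < b + j + 1} = Ico (a - b) k := by
    ext j
    simp only [mem_filter, mem_range, mem_Ico]
    omega
  rw [this, Nat.card_Ico]
  omega

theorem two_mul_sum_range_add_succ (c k : ℕ) :
    2 * ∑ j ∈ range k, (c + j + 1) = 2 * k * c + k * (k + 1) := by
  induction k with
  | zero => simp
  | succ k ih => rw [sum_range_succ, mul_add, ih]; ring

theorem two_mul_sq_div_two_add_mod (k : ℕ) : 2 * (k ^ 2 / 2) + k % 2 = k ^ 2 := by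
  rcases Nat.even_or_odd' k with ⟨i, rfl | rfl⟩ <;> ring_nf <;> omega

theorem sq_div_two_eq (k : ℕ) : k ^ 2 / 2 = k / 2 * k + k % 2 * (k / 2) := by
  rcases Nat.even_or_odd' k with ⟨i, rfl | rfl⟩
  · rw [show 2 * i / 2 = i by omega, show 2 * i % 2 = 0 by omega]
    ring_nf
    omega
  · rw [show (2 * i + 1) / 2 = i by omega, show (2 * i + 1) % 2 = 1 by omega]
    ring_nf
    omega

end AntiBonacci

open AntiBonacci

namespace CompPair

variable {A B : ℕ → ℕ} (hc : CompPair A B)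
include hc

theorem ne {t m : ℕ} (ht : 1 ≤ t) (hm : 1 ≤ m) : A t ≠ B m := by
  intro heq
  rcases hc.2.2.2.2 (B m) (hc.2.2.2.1 m hm) with ⟨-, hB⟩ | ⟨hA, -⟩
  · exact hB ⟨m, hm, rfl⟩
  · exact hA ⟨t, ht, heq⟩

theorem countLE_add_countLE (x : ℕ) : countLE A x + countLE B x = x := by
  classical
  have hrange {f : ℕ → ℕ} (hf : StrictMonoOn f (Set.Ici 1)) (hf1 : 1 ≤ f 1) :
      countLE f x = #{v ∈ Icc 1 x | ∃ t, 1 ≤ t ∧ f t = v} := by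
    refine card_bij (fun t _ => f t) ?_ ?_ ?_
    · intro t ht
      simp only [mem_filter, mem_Icc] at ht ⊢
      exact ⟨⟨ht.1.1.trans (le_apply hf hf1 ht.1.1), ht.2⟩, t, ht.1.1, rfl⟩
    · intro t ht t' ht' hff
      simp only [mem_filter, mem_Icc] at ht ht'
      exact hf.injOn (Set.mem_Ici.2 ht.1.1) (Set.mem_Ici.2 ht'.1.1) hff
    · intro v hv
      simp only [mem_filter, mem_Icc] at hv
      obtain ⟨⟨-, hvx⟩, t, ht, rfl⟩ := hv
      refine ⟨t, ?_, rfl⟩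
      simp only [mem_filter, mem_Icc]
      exact ⟨⟨ht, (le_apply hf hf1 ht).trans hvx⟩, hvx⟩
  obtain ⟨hA, hB, hA1, hB1, hcov⟩ := hc
  have hBA : {v ∈ Icc 1 x | ∃ t, 1 ≤ t ∧ B t = v} =
      {v ∈ Icc 1 x | ¬ ∃ t, 1 ≤ t ∧ A t = v} := by
    refine filter_congr fun v hv => ?_
    rcases hcov v (mem_Icc.1 hv).1 with ⟨h1, h2⟩ | ⟨h1, h2⟩ <;>
      simp only [h1, h2, not_true, not_false_iff]
  rw [hrange hA (hA1 1 le_rfl), hrange hB (hB1 1 le_rfl), hBA, card_filter_add_card_filter_not,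
    Nat.card_Icc, Nat.add_sub_cancel]

/-- `A t - t` is the number of `B`-terms below `A t`. -/
theorem lt_iff {t m : ℕ} (ht : 1 ≤ t) (hm : 1 ≤ m) : A t < B m ↔ A t < t + m := by
  have hsum := hc.countLE_add_countLE (A t)
  rw [countLE_apply hc.1 (hc.2.2.1 1 le_rfl) ht] at hsum
  rw [← not_le, ← le_countLE_iff hc.2.1 (hc.2.2.2.1 1 le_rfl) hm]
  omega

theorem eq_add_card {m N : ℕ} (hm : 1 ≤ m) (hN : ∀ t, 1 ≤ t → A t < t + m → t < N) :
    B m = m + #{t ∈ Ico 1 N | A t < t + m} := by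
  have hsum := hc.countLE_add_countLE (B m)
  rw [countLE_apply hc.2.1 (hc.2.2.2.1 1 le_rfl) hm] at hsum
  have hset : {t ∈ Icc 1 (B m) | A t ≤ B m} = {t ∈ Ico 1 N | A t < t + m} := by
    ext t
    simp only [mem_filter, mem_Icc, mem_Ico]
    constructor
    · rintro ⟨⟨ht, -⟩, hle⟩
      have hlt := (hc.lt_iff ht hm).1 (lt_of_le_of_ne hle (hc.ne ht hm))
      exact ⟨⟨ht, hN t ht hlt⟩, hlt⟩
    · rintro ⟨⟨ht, -⟩, hlt⟩
      have := (hc.lt_iff ht hm).2 hlt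
      have := le_apply hc.1 (hc.2.2.1 1 le_rfl) ht
      omega
  unfold countLE at hsum
  rw [hset] at hsum
  omega

end CompPair

namespace AntiRec

variable {k : ℕ} {A B : ℕ → ℕ} (h : AntiRec k (fun _ => 1) A B)
include h

theorem eq_sum_range {n : ℕ} (hn : 1 ≤ n) : A n = ∑ j ∈ range k, B ((n - 1) * k + j + 1) := by
  rw [h.2 n hn, ← Fin.sum_univ_eq_sum_range (fun j => B ((n - 1) * k + j + 1))]
  simp only [one_mul]

theorem mul_succ_le (hk : 2 ≤ k) {t : ℕ} (ht : 1 ≤ t) : t * (k + 1) ≤ A t := by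
  have hsum : 2 * ∑ j ∈ range k, ((t - 1) * k + j + 1) ≤ 2 * A t := by
    rw [h.eq_sum_range ht]
    exact Nat.mul_le_mul_left 2 <| sum_le_sum fun j _ =>
      le_apply h.1.2.1 (h.1.2.2.2.1 1 le_rfl) (by omega)
  rw [two_mul_sum_range_add_succ] at hsum
  obtain ⟨s, rfl⟩ : ∃ s, t = s + 1 := ⟨t - 1, by omega⟩
  simp only [Nat.add_sub_cancel] at hsum
  have : s * (k + 1) ≤ s * (k * k) := Nat.mul_le_mul_left s (by nlinarith)
  nlinarith

theorem B_eq_add_card (hk : 2 ≤ k) {m n : ℕ} (hm : 1 ≤ m) (hmn : m ≤ n * k) :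
    B m = m + #{t ∈ Ico 1 n | A t < t + m} :=
  h.1.eq_add_card hm fun t ht hlt => by
    by_contra! hnt
    have := h.mul_succ_le hk ht
    have : n * k ≤ t * k := Nat.mul_le_mul_right k hnt
    nlinarith

theorem two_mul_apply_eq (hk : 2 ≤ k) {n : ℕ} (hn : 1 ≤ n) :
    2 * (A n : ℤ) = 2 * k ^ 2 * (n - 1) + k * (k + 1) +
      2 * ∑ t ∈ Ico 1 n, min (max ((n * k : ℤ) - (A t - t)) 0) k := by
  have hB : ∀ j ∈ range k, B ((n - 1) * k + j + 1) =
      ((n - 1) * k + j + 1) + #{t ∈ Ico 1 n | A t < t + ((n - 1) * k + j + 1)} := by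
    intro j hj
    refine h.B_eq_add_card hk (by omega) ?_
    have := mem_range.1 hj
    calc (n - 1) * k + j + 1 ≤ (n - 1) * k + k := by omega
      _ = n * k := by rw [← Nat.succ_mul, Nat.succ_eq_add_one, Nat.sub_add_cancel hn]
  have hswap : ∑ j ∈ range k, #{t ∈ Ico 1 n | A t < t + ((n - 1) * k + j + 1)} =
      ∑ t ∈ Ico 1 n, #{j ∈ range k | A t < t + (n - 1) * k + j + 1} := by
    simp only [card_filter]
    rw [sum_comm]
    simp only [add_assoc]
  have hterm : ∀ t ∈ Ico 1 n, ((#{j ∈ range k | A t < t + (n - 1) * k + j + 1} : ℕ) : ℤ) =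
      min (max ((n * k : ℤ) - (A t - t)) 0) k := by
    intro t _
    rw [card_filter_lt_add]
    push_cast [Nat.cast_sub hn]
    ring_nf
  have hsum : (2 : ℤ) * ∑ j ∈ range k, (((n - 1) * k + j + 1 : ℕ) : ℤ) =
      2 * k * ((n - 1 : ℕ) * k) + k * (k + 1) := by
    exact_mod_cast two_mul_sum_range_add_succ ((n - 1) * k) k
  rw [h.eq_sum_range hn, sum_congr rfl hB, sum_add_distrib, hswap, Nat.cast_add, Nat.cast_sum,
    Nat.cast_sum, sum_congr rfl hterm, mul_add, hsum, Nat.cast_sub hn]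
  push_cast
  ring

theorem apply_bounds (hk : 2 ≤ k) (n : ℕ) (hn : 1 ≤ n) :
    k ^ 2 * (n - 1) + k ^ 2 / 2 + n ≤ A n ∧ A n < k ^ 2 * (n - 1) + k ^ 2 / 2 + n + k := by
  induction n using Nat.strong_induction_on with
  | _ n ih =>
  set L := k ^ 2 / 2
  have hc : ∀ t < n - 1, (t * k ^ 2 : ℤ) ≤ A (1 + t) - (1 + t : ℕ) - L ∧
      (A (1 + t) - (1 + t : ℕ) - L : ℤ) ≤ t * k ^ 2 + k - 1 := by
    intro t ht
    obtain ⟨h1, h2⟩ := ih (1 + t) (by omega) (by omega)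
    rw [Nat.add_sub_cancel_left] at h1 h2
    zify at h1 h2
    push_cast
    constructor <;> linarith
  have hk2 : 2 * k ≤ k ^ 2 := by nlinarith
  have hL1 : 1 ≤ L := by omega
  have hLk : L ≤ k ^ 2 := by omega
  obtain ⟨hlo, hhi⟩ := mul_sum_clamp_bounds (by omega) hc (v := n * k - L)
    (by push_cast [Nat.cast_sub hn]; zify at hL1 hk2; nlinarith)
    (by zify at hLk; nlinarith)
  have heq := h.two_mul_apply_eq hk hn
  rw [sum_Ico_eq_sum_range] at heq
  simp only [sub_sub_sub_cancel_right] at hlo hhi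
  set S := ∑ t ∈ range (n - 1), min (max ((n * k : ℤ) - (A (1 + t) - (1 + t : ℕ))) 0) k
  have hL2 : 2 * (L : ℤ) + (k % 2 : ℕ) = k ^ 2 := by exact_mod_cast two_mul_sq_div_two_add_mod k
  obtain ⟨i, r, hr, hki⟩ : ∃ i r : ℕ, r ≤ 1 ∧ (k : ℤ) = 2 * i + r :=
    ⟨k / 2, k % 2, by omega, by push_cast; omega⟩
  rw [show k % 2 = r by omega] at hL2
  have hkk : (k : ℤ) ^ 2 = 2 * (k * i) + k * r := by rw [sq]; nth_rw 2 [hki]; ring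
  have hkr : (0 : ℤ) ≤ k * r := by positivity
  have hlower : (n : ℤ) - i - r ≤ S := by
    by_contra! hS
    have := mul_le_mul_of_nonneg_left (Int.le_sub_one_of_lt hS) (k.cast_nonneg (α := ℤ))
    linarith
  have hupper : S < n + i := by
    by_contra! hS
    have := mul_le_mul_of_nonneg_left hS (k.cast_nonneg (α := ℤ))
    have : (k : ℤ) * r ≤ k * 1 :=
      mul_le_mul_of_nonneg_left (by exact_mod_cast hr) k.cast_nonneg
    have : (2 : ℤ) ≤ k := by exact_mod_cast hk
    linarith
  zify [hn]
  constructor <;> linarith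

end AntiRec

/-- The anti-k-bonacci numbers satisfy `A n ≡ i·k + a_n (mod κ)` with bounded `a_n`,
where `i = ⌊k/2⌋` and `κ = k² + 1`. -/
theorem stmt10 (k : ℕ) (hk : 2 < k) (A B : ℕ → ℕ)
    (h : AntiRec k (fun _ => 1) A B) :
    ∀ n, 1 ≤ n → ∃ an : ℕ,
      A n ≡ (k / 2) * k + an [MOD k ^ 2 + 1] ∧
      (k % 2 = 0 → 1 ≤ an ∧ an ≤ k) ∧
      (k % 2 = 1 → k / 2 + 1 ≤ an ∧ an ≤ k / 2 + k) := by
  intro n hn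
  obtain ⟨hlo, hhi⟩ := h.apply_bounds (by omega) n hn
  have hL := sq_div_two_eq k
  have hsplit : (k ^ 2 + 1) * (n - 1) = k ^ 2 * (n - 1) + (n - 1) := by ring
  obtain ⟨an, han⟩ : ∃ an, an = A n - (k ^ 2 + 1) * (n - 1) - k / 2 * k := ⟨_, rfl⟩
  have hA : A n = (k ^ 2 + 1) * (n - 1) + (k / 2 * k + an) := by omega
  refine ⟨an, ?_, fun he => ?_, fun ho => ?_⟩
  · rw [Nat.ModEq, hA, Nat.mul_add_mod]
  · rw [he, zero_mul, add_zero] at hL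
    omega
  · rw [ho, one_mul] at hL
    omega
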